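/- arXiv:0905.2697 — 4 statements merged into one kernel-verified Lean document; each statement's English description precedes it below -/
import Mathlib

section
/- For sections X, Y of the prolongation 𝓛E and a Lagrangian L on a Lie algebroid E, the Lie derivative of the Poincaré 1-form satisfies (d^{𝓛E}_X Θ_L)(Y) = Θ_{d^{𝓛E}_X L}(Y) + d^{𝓛E}L([X, S(Y)]_{𝓛E} − S([X,Y]_{𝓛E})), where S is the vertical endomorphism. -/
/-- Algebraic model of a Lie algebroid over a base manifold `M`:
`R` plays the role of `C^∞(M)` and `S` that of the module of sections `Γ(E)`.
The anchor is an `R`-linear map into the derivations of `R`, and the Leibniz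
compatibility `[X, f•Y] = (ρ X f) • Y + f • [X,Y]` holds.  The anchor is a
morphism of Lie brackets (a consequence of the axioms in the geometric case). -/
structure Algebroid (R S : Type) [CommRing R] [LieRing S] [Module R S] : Type where
  ρ : S →ₗ[R] Derivation ℤ R R
  leibniz : ∀ (X Y : S) (f : R), ⁅X, f • Y⁆ = ρ X f • Y + f • ⁅X, Y⁆
  anchor_bracket : ∀ X Y : S, ρ ⁅X, Y⁆ = ⁅ρ X, ρ Y⁆

namespace Algebroid

variable {R S : Type} [CommRing R] [LieRing S] [Module R S]

/-- The exterior differential of a function (a `0`-form), as a raw map. -/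
def d0 (A : Algebroid R S) (f : R) : S → R := fun X => A.ρ X f

/-- The exterior differential of a function, as a linear `1`-form. -/
def d0lin (A : Algebroid R S) (f : R) : S →ₗ[R] R where
  toFun X := A.ρ X f
  map_add' X Y := by simp
  map_smul' g X := by simp

/-- The exterior differential of a `1`-form (Koszul formula). -/
def d1 (A : Algebroid R S) (θ : S → R) : S → S → R :=
  fun X Y => A.ρ X (θ Y) - A.ρ Y (θ X) - θ ⁅X, Y⁆

/-- The exterior differential of a `2`-form (Koszul formula). -/
def d2 (A : Algebroid R S) (ω : S → S → R) : S → S → S → R :=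
  fun X Y Z => A.ρ X (ω Y Z) - A.ρ Y (ω X Z) + A.ρ Z (ω X Y)
    - ω ⁅X, Y⁆ Z + ω ⁅X, Z⁆ Y - ω ⁅Y, Z⁆ X

/-- Lie derivative of a `1`-form along a section, via Cartan's magic formula. -/
def ld1 (A : Algebroid R S) (X : S) (θ : S → R) : S → R :=
  fun Y => A.d1 θ X Y + A.d0 (θ X) Y

/-- Lie derivative of a `2`-form along a section, via Cartan's magic formula. -/
def ld2 (A : Algebroid R S) (X : S) (ω : S → S → R) : S → S → R :=
  fun Y Z => A.d2 ω X Y Z + A.d1 (fun W => ω X W) Y Z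

/-- Lie derivative of a linear `1`-form along a section `X`:
`(d^E_X α)(Y) = ρ(X)(α Y) − α [X,Y]`. -/
def lieOne (A : Algebroid R S) (X : S) (α : S →ₗ[R] R) : S →ₗ[R] R where
  toFun Y := A.ρ X (α Y) - α ⁅X, Y⁆
  map_add' Y Z := by simp [lie_add]; ring
  map_smul' f Y := by
    simp only [map_smul, smul_eq_mul, Derivation.leibniz, A.leibniz, map_add,
      RingHom.id_apply, map_smul]
    ring

/-- auxiliary reindexing: the increasing enumeration of `{0,…,k} \ {i,j}` for `i < j`. -/
def skip2 (i j n : ℕ) : ℕ :=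
  if n < i then (if n < j then n else n + 1)
  else (if n + 1 < j then n + 1 else n + 2)

/-- The Koszul exterior differential on raw `k`-forms:
`dθ(X₀,…,X_k) = Σᵢ (−1)ⁱ ρ(Xᵢ)θ(…,X̂ᵢ,…) + Σ_{i<j} (−1)^{i+j} θ([Xᵢ,Xⱼ],…,X̂ᵢ,…,X̂ⱼ,…)`. -/
def koszul (A : Algebroid R S) {k : ℕ} (θ : (Fin k → S) → R) :
    (Fin (k + 1) → S) → R := fun X =>
  (∑ i : Fin (k + 1), (-1 : ℤ) ^ (i : ℕ) • A.ρ (X i) (θ fun l => X (i.succAbove l)))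
    + ∑ i : Fin (k + 1), ∑ j : Fin (k + 1),
      if _hij : (i : ℕ) < (j : ℕ) then
        (-1 : ℤ) ^ ((i : ℕ) + (j : ℕ)) •
          θ (fun l => if hl : (l : ℕ) = 0 then ⁅X i, X j⁆
            else X ⟨skip2 i j ((l : ℕ) - 1), by
              have h1 := l.isLt
              simp only [skip2]
              split <;> split <;> omega⟩)
      else 0

/-- Contraction of a raw `(k+1)`-form with a section. -/
def insV {M : Type} (Z : M) {k : ℕ} (θ : (Fin (k + 1) → M) → R) :
    (Fin k → M) → R := fun Y => θ (Fin.cons Z Y)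

/-- Lie derivative on raw forms of any degree via Cartan's formula
`d_X = ι_X ∘ d + d ∘ ι_X` (on `0`-forms only the first summand occurs). -/
def lieK (A : Algebroid R S) (Z : S) : ∀ {k : ℕ}, ((Fin k → S) → R) → (Fin k → S) → R
  | 0, θ => fun Y => A.koszul θ (Fin.cons Z Y)
  | _ + 1, θ => fun Y => A.koszul θ (Fin.cons Z Y) + A.koszul (fun W => θ (Fin.cons Z W)) Y

/-- The wedge product of raw forms (normalized by `k! l!`). -/
def wedge {T M : Type} [CommRing T] {k l : ℕ}
    (α : (Fin k → M) → T) (β : (Fin l → M) → T) : (Fin (k + l) → M) → T := fun X =>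
  ∑ σ : Equiv.Perm (Fin (k + l)),
    (Equiv.Perm.sign σ : ℤ) •
      (α (fun i => X (σ (Fin.castAdd l i))) * β (fun j => X (σ (Fin.natAdd k j))))

/-- The `n`-th wedge power of a raw `2`-form. -/
def formPow {T M : Type} [CommRing T] (ω : (Fin 2 → M) → T) :
    (n : ℕ) → (Fin (2 * n) → M) → T
  | 0 => fun _ => 1
  | n + 1 => fun X => wedge ω (formPow ω n) (fun i => X (Fin.cast (by ring) i))

end Algebroid
/-- Algebraic model of the prolongation Lie algebroid `𝓛E` of a Lie algebroid `E`.
`R = C^∞(M)`, `S = Γ(E)`, `RE = C^∞(E)`, `SE = Γ(𝓛E)`.  The structure records the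
pullback of functions `pb = (τ^E)^*`, the fiberwise-linear function `hat α = α̂`,
the complete and vertical lifts `c`, `v`, the Euler section `Δ` and the vertical
endomorphism `Sve`, together with their standard properties in the geometric model. -/
structure Prolongation (R S RE SE : Type) [CommRing R] [LieRing S] [Module R S]
    [CommRing RE] [LieRing SE] [Module RE SE] : Type where
  A : Algebroid R S
  AE : Algebroid RE SE
  pb : R →+* RE
  pb_inj : Function.Injective pb
  hat : (S →ₗ[R] R) →+ RE
  c : S → SE
  v : S → SE
  Δ : SE
  Sve : SE →ₗ[RE] SE
  c_add : ∀ X Y, c (X + Y) = c X + c Y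
  v_add : ∀ X Y, v (X + Y) = v X + v Y
  bracket_cc : ∀ X Y, ⁅c X, c Y⁆ = c ⁅X, Y⁆
  bracket_cv : ∀ X Y, ⁅c X, v Y⁆ = v ⁅X, Y⁆
  bracket_vv : ∀ X Y, ⁅v X, v Y⁆ = 0
  anchor_c_pb : ∀ X f, AE.ρ (c X) (pb f) = pb (A.ρ X f)
  anchor_v_pb : ∀ X f, AE.ρ (v X) (pb f) = 0
  anchor_c_hat : ∀ X α, AE.ρ (c X) (hat α) = hat (A.lieOne X α)
  anchor_v_hat : ∀ X α, AE.ρ (v X) (hat α) = pb (α X)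
  euler_pb : ∀ f, AE.ρ Δ (pb f) = 0
  euler_hat : ∀ α, AE.ρ Δ (hat α) = hat α
  bracket_euler_v : ∀ X, ⁅Δ, v X⁆ = -v X
  bracket_euler_c : ∀ X, ⁅Δ, c X⁆ = 0
  Sve_c : ∀ X, Sve (c X) = v X
  Sve_v : ∀ X, Sve (v X) = 0
  span_lifts : ∀ Z : SE, Z ∈ Submodule.span RE (Set.range c ∪ Set.range v)
  pb_range : ∀ g : RE, (∀ X : S, AE.ρ (v X) g = 0) → ∃ f : R, g = pb f
  hat_plus_pb : ∀ (g : RE) (α : S →ₗ[R] R),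
      (∀ X : S, AE.ρ (v X) g = pb (α X)) → ∃ V : R, g = hat α + pb V

namespace Prolongation

variable {R S RE SE : Type} [CommRing R] [LieRing S] [Module R S]
  [CommRing RE] [LieRing SE] [Module RE SE]

/-- The Poincaré 1-form `Θ_L = d^{𝓛E}L ∘ S` of a Lagrangian `L`. -/
def theta (P : Prolongation R S RE SE) (L : RE) : SE → RE :=
  fun Z => P.AE.ρ (P.Sve Z) L

/-- The Poincaré 2-form `ω_L = −d^{𝓛E}Θ_L` of a Lagrangian `L`. -/
def omegaL (P : Prolongation R S RE SE) (L : RE) : SE → SE → RE :=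
  fun Z W => -P.AE.d1 (P.theta L) Z W

/-- The energy `E_L = ρ^{𝓛E}(Δ)L − L` of a Lagrangian `L`. -/
def energy (P : Prolongation R S RE SE) (L : RE) : RE := P.AE.ρ P.Δ L - L

/-- `L` is a regular Lagrangian: `ω_L` is non-degenerate. -/
def Regular (P : Prolongation R S RE SE) (L : RE) : Prop :=
  ∀ Z : SE, (∀ W : SE, P.omegaL L Z W = 0) → Z = 0

/-- `Z` is the Lagrangian dynamics of `L`: `ι_Z ω_L = d^{𝓛E}E_L`. -/
def IsDynamics (P : Prolongation R S RE SE) (L : RE) (Z : SE) : Prop :=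
  ∀ W : SE, P.omegaL L Z W = P.AE.ρ W (P.energy L)

/-- Gauge equivalence: `L' = L + α̂ + V∘τ^E` with `d^E α = 0` and `d^E V = 0`. -/
def GaugeEquiv (P : Prolongation R S RE SE) (L L' : RE) : Prop :=
  ∃ (α : S →ₗ[R] R) (V : R), (∀ X Y : S, P.A.d1 ⇑α X Y = 0) ∧
    (∀ X : S, P.A.ρ X V = 0) ∧ L' = L + P.hat α + P.pb V

end Prolongation

/-- For sections `X, Y` of `𝓛E` and a Lagrangian `L`,
`(d^{𝓛E}_X Θ_L)(Y) = Θ_{d^{𝓛E}_X L}(Y) + d^{𝓛E}L([X, S Y] − S [X, Y])`. -/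
theorem lieDeriv_theta
    {R S RE SE : Type} [CommRing R] [LieRing S] [Module R S]
    [CommRing RE] [LieRing SE] [Module RE SE]
    (P : Prolongation R S RE SE) (L : RE) (X Y : SE) :
    P.AE.ld1 X (P.theta L) Y
      = P.theta (P.AE.ρ X L) Y + P.AE.ρ (⁅X, P.Sve Y⁆ - P.Sve ⁅X, Y⁆) L := by
  have h := congrArg (fun D : Derivation ℤ RE RE => D L) (P.AE.anchor_bracket X (P.Sve Y))
  simp only [Algebroid.ld1, Algebroid.d1, Algebroid.d0, Prolongation.theta, map_sub,
    Derivation.sub_apply, Derivation.commutator_apply] at h ⊢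
  rw [h]
  ring
end

section
/- For any section X of a Lie algebroid E, its complete lift X^c to the prolongation 𝓛E commutes with the vertical endomorphism in the sense that S([X^c, Y]_{𝓛E}) = [X^c, S(Y)]_{𝓛E} for all sections Y of 𝓛E; consequently X^c is an admissible section for Θ_L, ω_L and E_L, i.e., d^{𝓛E}_{X^c}Θ_L = Θ_{d^{𝓛E}_{X^c}L}, d^{𝓛E}_{X^c}ω_L = ω_{d^{𝓛E}_{X^c}L}, and d^{𝓛E}_{X^c}E_L = E_{d^{𝓛E}_{X^c}L} for every Lagrangian L. -/
section Aux

variable {R S : Type} [CommRing R] [LieRing S] [Module R S]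

private lemma aux_hcomm (A : Algebroid R S) (a b : S) (g : R) :
    A.ρ ⁅a, b⁆ g = A.ρ a (A.ρ b g) - A.ρ b (A.ρ a g) := by
  rw [A.anchor_bracket]; simp [Derivation.commutator_apply]

private lemma aux_ld2 (A : Algebroid R S) (θ : S → R)
    (hadd : ∀ a b, θ (a + b) = θ a + θ b) (hneg : ∀ a, θ (-a) = -θ a)
    (X Y Z : S) :
    A.ld2 X (fun a b => -(A.d1 θ a b)) Y Z = -(A.d1 (A.ld1 X θ) Y Z) := by
  have hsub : ∀ a b, θ (a - b) = θ a - θ b := by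
    intro a b; rw [sub_eq_add_neg, hadd, hneg, sub_eq_add_neg]
  have hZY : ⁅Z, Y⁆ = -⁅Y, Z⁆ := by rw [← lie_skew]
  have hZX : ⁅Z, X⁆ = -⁅X, Z⁆ := by rw [← lie_skew]
  have hYX : ⁅Y, X⁆ = -⁅X, Y⁆ := by rw [← lie_skew]
  have e1 : ⁅⁅X, Y⁆, Z⁆ = -⁅Z, ⁅X, Y⁆⁆ := by rw [← lie_skew]
  have hjac : θ ⁅X, ⁅Y, Z⁆⁆ = θ ⁅Y, ⁅X, Z⁆⁆ - θ ⁅Z, ⁅X, Y⁆⁆ := by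
    rw [leibniz_lie, e1, hadd, hneg]; ring
  simp only [Algebroid.ld2, Algebroid.d2, Algebroid.d1, Algebroid.ld1, Algebroid.d0,
    lie_lie, hZY, hZX, hYX, lie_neg, neg_lie, hsub, hadd, hneg, map_sub, map_add,
    map_neg, aux_hcomm, hjac]
  ring

end Aux

/-- For any section `X` of `E`, the complete lift `X^c` satisfies
`S [X^c, Y] = [X^c, S Y]` for all sections `Y` of `𝓛E`; consequently `X^c` is an
admissible section for `Θ_L`, `ω_L` and `E_L`, for every Lagrangian `L`. -/
theorem complete_lift_admissible
    {R S RE SE : Type} [CommRing R] [LieRing S] [Module R S]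
    [CommRing RE] [LieRing SE] [Module RE SE]
    (P : Prolongation R S RE SE) (X : S) :
    (∀ Y : SE, P.Sve ⁅P.c X, Y⁆ = ⁅P.c X, P.Sve Y⁆) ∧
    ∀ L : RE,
      (∀ Y : SE, P.AE.ld1 (P.c X) (P.theta L) Y = P.theta (P.AE.ρ (P.c X) L) Y) ∧
      (∀ Y Z : SE,
        P.AE.ld2 (P.c X) (P.omegaL L) Y Z = P.omegaL (P.AE.ρ (P.c X) L) Y Z) ∧
      P.AE.ρ (P.c X) (P.energy L) = P.energy (P.AE.ρ (P.c X) L) := by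
  have h1 : ∀ Y : SE, P.Sve ⁅P.c X, Y⁆ = ⁅P.c X, P.Sve Y⁆ := by
    intro Y
    have h := P.span_lifts Y
    induction h using Submodule.span_induction with
    | mem y hy =>
      rcases hy with ⟨Z, rfl⟩ | ⟨Z, rfl⟩
      · rw [P.bracket_cc, P.Sve_c, P.Sve_c, P.bracket_cv]
      · rw [P.bracket_cv, P.Sve_v, P.Sve_v, lie_zero]
    | zero => simp
    | add a b _ _ ha hb => simp [lie_add, ha, hb]
    | smul f y _ hy =>
      rw [P.AE.leibniz, map_add, map_smul, map_smul, hy, map_smul, P.AE.leibniz]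
  refine ⟨h1, fun L => ?_⟩
  have hθ : ∀ Y : SE, P.AE.ld1 (P.c X) (P.theta L) Y
      = P.theta (P.AE.ρ (P.c X) L) Y := by
    intro Y
    simp only [Algebroid.ld1, Algebroid.d1, Algebroid.d0, Prolongation.theta, h1,
      aux_hcomm]
    ring
  refine ⟨hθ, fun Y Z => ?_, ?_⟩
  · have hadd : ∀ a b : SE, P.theta L (a + b) = P.theta L a + P.theta L b := by
      intro a b; simp [Prolongation.theta, map_add]
    have hneg : ∀ a : SE, P.theta L (-a) = -P.theta L a := by
      intro a; simp [Prolongation.theta, map_neg]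
    have := aux_ld2 P.AE (P.theta L) hadd hneg (P.c X) Y Z
    rw [show P.omegaL L = fun a b => -(P.AE.d1 (P.theta L) a b) from rfl, this,
      show P.AE.ld1 (P.c X) (P.theta L) = P.theta (P.AE.ρ (P.c X) L) from funext hθ]
    rfl
  · have hz : ⁅P.c X, P.Δ⁆ = (0 : SE) := by
      rw [← lie_skew, P.bracket_euler_c, neg_zero]
    have hc := aux_hcomm P.AE (P.c X) P.Δ L
    rw [hz] at hc
    simp only [map_zero, Derivation.zero_apply] at hc
    simp only [Prolongation.energy, map_sub]
    rw [sub_eq_zero.mp hc.symm]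
end

section
/- Let L be a regular Lagrangian on a Lie algebroid E with dynamics Z_L, and let X be a section of E whose complete lift satisfies [X^c, Z_L]_{𝓛E} = 0. Then the Lagrangian L' = d^{𝓛E}_{X^c} L satisfies ι_{Z_L}ω_{L'} = d^{𝓛E}E_{L'}; in particular, if L' is also regular, then Z_{L'} = Z_L. -/
/-- If `L` is a regular Lagrangian with dynamics `Z_L` and `X` is a
section of `E` with `[X^c, Z_L] = 0`, then `L' = d^{𝓛E}_{X^c} L` satisfies
`ι_{Z_L} ω_{L'} = d^{𝓛E} E_{L'}`; if moreover `L'` is regular, its dynamics is `Z_L`. -/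
theorem symmetry_gives_equivalent_lagrangian
    {R S RE SE : Type} [CommRing R] [LieRing S] [Module R S]
    [CommRing RE] [LieRing SE] [Module RE SE]
    (P : Prolongation R S RE SE) (L : RE) (hreg : P.Regular L)
    (Z : SE) (hZ : P.IsDynamics L Z) (X : S) (hsym : ⁅P.c X, Z⁆ = 0) :
    P.IsDynamics (P.AE.ρ (P.c X) L) Z ∧
      (P.Regular (P.AE.ρ (P.c X) L) →
        ∀ Z' : SE, P.IsDynamics (P.AE.ρ (P.c X) L) Z' → Z' = Z) := by
  -- D = Lie derivative along X^c on functions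
  have hSve : ∀ W : SE, ⁅P.c X, P.Sve W⁆ = P.Sve ⁅P.c X, W⁆ := by
    intro W
    have hW := P.span_lifts W
    induction hW using Submodule.span_induction with
    | mem w hw =>
      rcases hw with ⟨Y, rfl⟩ | ⟨Y, rfl⟩
      · rw [P.Sve_c, P.bracket_cv, P.bracket_cc, P.Sve_c]
      · rw [P.Sve_v, P.bracket_cv, P.Sve_v, lie_zero]
    | zero => simp
    | add w₁ w₂ _ _ h₁ h₂ => simp [lie_add, h₁, h₂]
    | smul f w _ h =>
      simp only [LinearMap.map_smul, P.AE.leibniz, map_add, h]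
  have hcomm : ∀ (W : SE) (g : RE),
      P.AE.ρ W (P.AE.ρ (P.c X) g) =
        P.AE.ρ (P.c X) (P.AE.ρ W g) - P.AE.ρ ⁅P.c X, W⁆ g := by
    intro W g
    have h := P.AE.anchor_bracket (P.c X) W
    have h2 : P.AE.ρ ⁅P.c X, W⁆ g =
        P.AE.ρ (P.c X) (P.AE.ρ W g) - P.AE.ρ W (P.AE.ρ (P.c X) g) := by
      rw [h, Derivation.commutator_apply]
    rw [h2]; ring
  have hθ : ∀ W : SE, P.theta (P.AE.ρ (P.c X) L) W =
      P.AE.ρ (P.c X) (P.theta L W) - P.theta L ⁅P.c X, W⁆ := by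
    intro W
    show P.AE.ρ (P.Sve W) (P.AE.ρ (P.c X) L) = _
    rw [hcomm (P.Sve W) L, hSve W]
    rfl
  have hE : P.energy (P.AE.ρ (P.c X) L) = P.AE.ρ (P.c X) (P.energy L) := by
    have h0 : ⁅P.c X, P.Δ⁆ = (0:SE) := by
      rw [← lie_skew, P.bracket_euler_c, neg_zero]
    show P.AE.ρ P.Δ (P.AE.ρ (P.c X) L) - P.AE.ρ (P.c X) L = _
    rw [hcomm P.Δ L, h0]
    simp only [map_zero, Derivation.zero_apply, sub_zero]
    show _ = P.AE.ρ (P.c X) (P.AE.ρ P.Δ L - L)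
    rw [Derivation.map_sub]
  have hρZ : ∀ g : RE, P.AE.ρ Z (P.AE.ρ (P.c X) g) = P.AE.ρ (P.c X) (P.AE.ρ Z g) := by
    intro g
    rw [hcomm Z g, hsym]
    simp
  have hθ0 : P.theta L ⁅P.c X, Z⁆ = 0 := by
    show P.AE.ρ (P.Sve ⁅P.c X, Z⁆) L = 0
    rw [hsym, map_zero, map_zero]
    rfl
  have hdyn : P.IsDynamics (P.AE.ρ (P.c X) L) Z := by
    intro W
    have hZW := hZ W
    have hZW' := hZ ⁅P.c X, W⁆
    have hDZW := congrArg (P.AE.ρ (P.c X)) hZW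
    simp only [Prolongation.omegaL, Algebroid.d1] at hZW hZW' hDZW ⊢
    rw [hθ W, hθ Z, hθ ⁅Z, W⁆, hθ0, sub_zero, hE]
    have hjac : ⁅P.c X, ⁅Z, W⁆⁆ = ⁅Z, ⁅P.c X, W⁆⁆ := by
      rw [leibniz_lie, hsym, zero_lie, zero_add]
    rw [hjac]
    rw [map_sub, hρZ (P.theta L W)]
    rw [hcomm W (P.theta L Z), hcomm W (P.energy L)]
    simp only [map_neg, map_sub] at hDZW
    linear_combination hDZW - hZW'
  refine ⟨hdyn, fun hreg' Z' hdyn' => ?_⟩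
  have hsub : ∀ W : SE, P.omegaL (P.AE.ρ (P.c X) L) (Z' - Z) W = 0 := by
    intro W
    have h1 := hdyn' W
    have h2 := hdyn W
    simp only [Prolongation.omegaL, Algebroid.d1, Prolongation.theta, sub_lie, map_sub,
      Derivation.sub_apply, Derivation.coe_sub, Pi.sub_apply] at h1 h2 ⊢
    linear_combination h1 - h2
  have := hreg' (Z' - Z) hsub
  rwa [sub_eq_zero] at this
end

section
/- Nöther's theorem on Lie algebroids: let L be a regular Lagrangian on a Lie algebroid E with dynamics Z_L, and X a section of E such that d^{𝓛E}_{X^c}L = (d^E h)^ for some h ∈ C^∞(M). Then for any K ∈ C^∞(E) with d^{𝓛E}K = 0, the function f = ι_{X^c}Θ_L − h∘τ^E + K satisfies ρ^{𝓛E}(Z_L)f = 0, i.e., f is a conserved quantity of the dynamics. -/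
/-- **Nöther's theorem on Lie algebroids.** If `L` is a regular
Lagrangian with dynamics `Z_L` and `X` is a section of `E` with
`d^{𝓛E}_{X^c} L = (d^E h)^` for some `h ∈ C^∞(M)`, then for any `K ∈ C^∞(E)` with
`d^{𝓛E}K = 0`, the function `f = ι_{X^c}Θ_L − h∘τ^E + K` is conserved:
`ρ^{𝓛E}(Z_L) f = 0`. -/
theorem noether
    {R S RE SE : Type} [CommRing R] [LieRing S] [Module R S]
    [CommRing RE] [LieRing SE] [Module RE SE]
    (P : Prolongation R S RE SE) (L : RE) (hreg : P.Regular L)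
    (Z : SE) (hZ : P.IsDynamics L Z) (X : S) (h : R)
    (hX : P.AE.ρ (P.c X) L = P.hat (P.A.d0lin h))
    (K : RE) (hK : ∀ U : SE, P.AE.ρ U K = 0) :
    P.AE.ρ Z (P.theta L (P.c X) - P.pb h + K) = 0 := by
  -- notation
  set ρ := fun (U : SE) (g : RE) => P.AE.ρ U g with hρ
  -- basic facts about theta
  have theta_def : ∀ W : SE, P.theta L W = P.AE.ρ (P.Sve W) L := fun _ => rfl
  have theta_zero : P.theta L 0 = 0 := by
    simp [Prolongation.theta]
  have theta_add : ∀ U V : SE, P.theta L (U + V) = P.theta L U + P.theta L V := by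
    intro U V; simp [Prolongation.theta]
  have theta_sub : ∀ U V : SE, P.theta L (U - V) = P.theta L U - P.theta L V := by
    intro U V; simp [Prolongation.theta]
  have theta_smul : ∀ (f : RE) (U : SE), P.theta L (f • U) = f * P.theta L U := by
    intro f U; simp [Prolongation.theta]
  -- commutator of anchors
  have comm : ∀ (U V : SE) (g : RE),
      P.AE.ρ ⁅U, V⁆ g = P.AE.ρ U (P.AE.ρ V g) - P.AE.ρ V (P.AE.ρ U g) := by
    intro U V g
    rw [P.AE.anchor_bracket]
    rfl
  -- Lemma A : Lie derivative of Θ_L along X^c is d(pb h)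
  have hA : ∀ W : SE, P.AE.ρ (P.c X) (P.theta L W) - P.theta L ⁅P.c X, W⁆
      = P.AE.ρ W (P.pb h) := by
    intro W
    have hW := P.span_lifts W
    induction hW using Submodule.span_induction with
    | mem x hx =>
      rcases hx with ⟨Y, rfl⟩ | ⟨Y, rfl⟩
      · -- complete lift
        have h1 : P.theta L (P.c Y) = P.AE.ρ (P.v Y) L := by
          rw [theta_def, P.Sve_c]
        have h2 : ⁅P.c X, P.c Y⁆ = P.c ⁅X, Y⁆ := P.bracket_cc X Y
        have h3 : P.theta L (P.c ⁅X, Y⁆) = P.AE.ρ (P.v ⁅X, Y⁆) L := by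
          rw [theta_def, P.Sve_c]
        have h4 : P.AE.ρ (P.c X) (P.AE.ρ (P.v Y) L)
            = P.AE.ρ (P.v Y) (P.AE.ρ (P.c X) L) + P.AE.ρ ⁅P.c X, P.v Y⁆ L := by
          have := comm (P.c X) (P.v Y) L
          linear_combination -this
        rw [h1, h2, h3, h4, P.bracket_cv, hX, P.anchor_v_hat, P.anchor_c_pb]
        have h5 : (P.A.d0lin h) Y = P.A.ρ Y h := rfl
        rw [h5]; ring
      · -- vertical lift
        have h1 : P.theta L (P.v Y) = 0 := by
          rw [theta_def, P.Sve_v]; simp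
        have h2 : P.theta L ⁅P.c X, P.v Y⁆ = 0 := by
          rw [P.bracket_cv, theta_def, P.Sve_v]; simp
        rw [h1, h2, P.anchor_v_pb]
        simp
    | zero =>
      rw [lie_zero, theta_zero]
      simp
    | add a b _ _ ha hb =>
      simp only [lie_add, theta_add, map_add, Derivation.add_apply]
      linear_combination ha + hb
    | smul f a _ ha =>
      have hb : ⁅P.c X, f • a⁆ = P.AE.ρ (P.c X) f • a + f • ⁅P.c X, a⁆ :=
        P.AE.leibniz (P.c X) a f
      have hs2 : P.theta L ⁅P.c X, f • a⁆
          = P.AE.ρ (P.c X) f * P.theta L a + f * P.theta L ⁅P.c X, a⁆ := by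
        rw [hb, theta_add, theta_smul, theta_smul]
      have hs3 := (P.AE.ρ (P.c X)).leibniz f (P.theta L a)
      simp only [smul_eq_mul] at hs3
      have hs4 : P.AE.ρ (f • a) (P.pb h) = f * P.AE.ρ a (P.pb h) := by
        rw [map_smul]; simp [smul_eq_mul]
      rw [theta_smul, hs2]
      linear_combination hs3 + f * ha - hs4
  -- Lemma B : ρ(X^c) E_L = 0
  have hB : P.AE.ρ (P.c X) (P.energy L) = 0 := by
    have h1 : P.AE.ρ (P.c X) (P.AE.ρ P.Δ L)
        = P.AE.ρ P.Δ (P.AE.ρ (P.c X) L) + P.AE.ρ ⁅P.c X, P.Δ⁆ L := by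
      have := comm (P.c X) P.Δ L
      linear_combination -this
    have h2 : ⁅P.c X, P.Δ⁆ = (0 : SE) := by
      rw [← lie_skew, P.bracket_euler_c]; simp
    rw [Prolongation.energy, map_sub, h1, h2, hX, P.euler_hat]
    simp
  -- the dynamics equation, unfolded
  have hdyn : ∀ W : SE,
      -(P.AE.ρ Z (P.theta L W) - P.AE.ρ W (P.theta L Z) - P.theta L ⁅Z, W⁆)
        = P.AE.ρ W (P.energy L) := by
    intro W
    exact hZ W
  -- Lemma C : ⁅X^c, Z⁆ = 0
  have hC : ⁅P.c X, Z⁆ = 0 := by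
    apply hreg
    intro W
    show -(P.AE.d1 (P.theta L) ⁅P.c X, Z⁆ W) = 0
    show -(P.AE.ρ ⁅P.c X, Z⁆ (P.theta L W) - P.AE.ρ W (P.theta L ⁅P.c X, Z⁆)
      - P.theta L ⁅⁅P.c X, Z⁆, W⁆) = 0
    have e1 := comm (P.c X) Z (P.theta L W)
    have e2 : P.theta L ⁅P.c X, Z⁆ = P.AE.ρ (P.c X) (P.theta L Z) - P.AE.ρ Z (P.pb h) := by
      have := hA Z; linear_combination -this
    have e2' := congrArg (P.AE.ρ W) e2
    rw [map_sub] at e2'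
    have e3 : ⁅⁅P.c X, Z⁆, W⁆ = ⁅P.c X, ⁅Z, W⁆⁆ - ⁅Z, ⁅P.c X, W⁆⁆ := by
      rw [lie_lie]
    have e3' : P.theta L ⁅⁅P.c X, Z⁆, W⁆
        = P.theta L ⁅P.c X, ⁅Z, W⁆⁆ - P.theta L ⁅Z, ⁅P.c X, W⁆⁆ := by
      rw [e3, theta_sub]
    have e4 : P.theta L ⁅P.c X, ⁅Z, W⁆⁆
        = P.AE.ρ (P.c X) (P.theta L ⁅Z, W⁆) - P.AE.ρ ⁅Z, W⁆ (P.pb h) := by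
      have := hA ⁅Z, W⁆; linear_combination -this
    have e5 : P.theta L ⁅Z, W⁆
        = P.AE.ρ Z (P.theta L W) - P.AE.ρ W (P.theta L Z) + P.AE.ρ W (P.energy L) := by
      have := hdyn W; linear_combination this
    have e4' := congrArg (P.AE.ρ (P.c X)) e5
    rw [map_add, map_sub] at e4'
    have e6 : P.theta L ⁅Z, ⁅P.c X, W⁆⁆
        = P.AE.ρ Z (P.theta L ⁅P.c X, W⁆) - P.AE.ρ ⁅P.c X, W⁆ (P.theta L Z)
          + P.AE.ρ ⁅P.c X, W⁆ (P.energy L) := by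
      have := hdyn ⁅P.c X, W⁆; linear_combination this
    have e7 : P.theta L ⁅P.c X, W⁆
        = P.AE.ρ (P.c X) (P.theta L W) - P.AE.ρ W (P.pb h) := by
      have := hA W; linear_combination -this
    have e7' := congrArg (P.AE.ρ Z) e7
    rw [map_sub] at e7'
    have e8 := comm (P.c X) W (P.theta L Z)
    have e9 := comm (P.c X) W (P.energy L)
    have e10 := comm Z W (P.pb h)
    have e11 := congrArg (P.AE.ρ W) hB
    rw [map_zero] at e11
    rw [e1, e2', e3', e4, e4', e6, e7', e8, e9, e10, e11]
    ring
  -- final computation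
  have hZcX : ⁅Z, P.c X⁆ = 0 := by rw [← lie_skew, hC]; simp
  have f1 : P.AE.ρ (P.c X) (P.theta L Z) = P.AE.ρ Z (P.pb h) := by
    have := hA Z
    rw [hC, theta_zero] at this
    linear_combination this
  have f2 := hdyn (P.c X)
  rw [hZcX, theta_zero, hB] at f2
  have f3 : P.AE.ρ Z (P.theta L (P.c X)) = P.AE.ρ Z (P.pb h) := by
    linear_combination -f2 + f1
  rw [map_add, map_sub, f3, hK]
  ring
end
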